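/- If an mm-space X satisfies the curvature-dimension condition CD(K, ∞) for a real number K > 0, then for any κ₀, κ₁ > 0 with κ₀ + κ₁ < 1, Sep(X; κ₀, κ₁) ≤ √((4/K) · log(1/(κ₀κ₁))). -/

import Mathlib

open MeasureTheory
open scoped ENNReal Classical

/-- `U(r) = r log r` (with `U(0) = 0`, since `Real.log 0 = 0`). -/
noncomputable def entFun (r : ℝ) : ℝ := r * Real.log r

/-- The relative entropy `Ent(ν | μ)`, valued in `EReal`. -/
noncomputable def relEnt {X : Type*} [MeasurableSpace X] (ν μ : Measure X) : EReal :=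
  if ν ≪ μ ∧ Integrable (fun x => entFun (ν.rnDeriv μ x).toReal) μ then
    ((∫ x, entFun (ν.rnDeriv μ x).toReal ∂μ : ℝ) : EReal)
  else ⊤

/-- The `L₂`-Wasserstein distance: the infimum over transport plans `π` between
`μ` and `ν` of `(∫ d(x, y)² dπ)^{1/2}`. -/
noncomputable def W2 {X : Type*} [PseudoEMetricSpace X] [MeasurableSpace X]
    (μ ν : Measure X) : ℝ≥0∞ :=
  ⨅ (π : Measure (X × X)) (_ : π.map Prod.fst = μ) (_ : π.map Prod.snd = ν),
    (∫⁻ p, edist p.1 p.2 ^ 2 ∂π) ^ (1 / 2 : ℝ)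

/-- Membership in `P₂(X)`: finiteness of the second moment. -/
def HasFiniteSecondMoment {X : Type*} [PseudoEMetricSpace X] [MeasurableSpace X]
    (ν : Measure X) : Prop :=
  ∃ x₀ : X, ∫⁻ x, edist x₀ x ^ 2 ∂ν < ⊤

/-- The curvature-dimension condition `CD(K, ∞)` for an mm-space `(X, μ)`. -/
def CDInfty {X : Type*} [PseudoEMetricSpace X] [MeasurableSpace X]
    (μ : Measure X) (K : ℝ) : Prop :=
  ∀ ν₀ ν₁ : Measure X, IsProbabilityMeasure ν₀ → IsProbabilityMeasure ν₁ →
    HasFiniteSecondMoment ν₀ → HasFiniteSecondMoment ν₁ →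
    ∀ ε : ℝ, 0 < ε → ∀ t : ℝ, t ∈ Set.Ioo (0 : ℝ) 1 →
      ∃ νt : Measure X, IsProbabilityMeasure νt ∧ HasFiniteSecondMoment νt ∧
        W2 νt ν₀ ≤ ENNReal.ofReal t * W2 ν₀ ν₁ + ENNReal.ofReal ε ∧
        W2 νt ν₁ ≤ ENNReal.ofReal (1 - t) * W2 ν₀ ν₁ + ENNReal.ofReal ε ∧
        relEnt νt μ ≤ ((1 - t : ℝ) : EReal) * relEnt ν₀ μ + ((t : ℝ) : EReal) * relEnt ν₁ μ
          - ((K / 2 * (t * (1 - t)) : ℝ) : EReal) * ((W2 ν₀ ν₁ ^ 2 : ℝ≥0∞) : EReal)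
          + ((ε : ℝ) : EReal)

/-- `d_X(A, B)` for subsets, valued in `[0, ∞]`. -/
noncomputable def setSep {X : Type*} [PseudoEMetricSpace X] (A B : Set X) : ℝ≥0∞ :=
  ⨅ (x ∈ A) (y ∈ B), edist x y

/-- The separation distance `Sep(X; κ₀, κ₁)`. -/
noncomputable def sep2 {X : Type*} [PseudoEMetricSpace X] [MeasurableSpace X]
    (μ : Measure X) (κ₀ κ₁ : ℝ) : ℝ≥0∞ :=
  ⨆ (A₀ : Set X) (A₁ : Set X) (_ : MeasurableSet A₀) (_ : MeasurableSet A₁)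
    (_ : ENNReal.ofReal κ₀ ≤ μ A₀) (_ : ENNReal.ofReal κ₁ ≤ μ A₁), setSep A₀ A₁

/-! Condition `μ` on `A₀` and on `A₁`. The conditioned measures have entropies `-log μ(Aᵢ)`, and
any coupling of them is carried by `A₀ × A₁`, so their `W₂`-distance is at least `d(A₀, A₁)`.
Since entropy relative to a probability measure is nonnegative, `CD(K, ∞)` at `t = 1/2` gives
`(K/8) W₂² ≤ (Ent ν₀ + Ent ν₁)/2`. The sets are first cut down to large balls, so that the
conditioned measures lie in `P₂(X)`, and the bound passes to the limit. -/

open ProbabilityTheory InformationTheory Filter Topology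

section

variable {X : Type*}

lemma sub_one_le_entFun {r : ℝ} (hr : 0 ≤ r) : r - 1 ≤ entFun r := by
  linarith [klFun_nonneg hr, show klFun r = entFun r + 1 - r from rfl]

lemma relEnt_nonneg [MeasurableSpace X] (ν μ : Measure X)
    [IsProbabilityMeasure ν] [IsProbabilityMeasure μ] : 0 ≤ relEnt ν μ := by
  rw [relEnt]
  split_ifs with h
  · obtain ⟨hac, hint⟩ := h
    have hmass : ∫ x, ((ν.rnDeriv μ x).toReal - 1) ∂μ = 0 := by
      rw [integral_sub Measure.integrable_toReal_rnDeriv (integrable_const 1),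
        Measure.integral_toReal_rnDeriv hac]
      simp
    have := integral_mono (Measure.integrable_toReal_rnDeriv.sub (integrable_const 1)) hint
      fun x => sub_one_le_entFun ENNReal.toReal_nonneg
    exact_mod_cast hmass ▸ this
  · exact le_top

lemma relEnt_cond [MeasurableSpace X] (μ : Measure X) [IsFiniteMeasure μ]
    {A : Set X} (hA : MeasurableSet A) (hcA : μ A ≠ 0) :
    relEnt μ[|A] μ = ((-Real.log (μ A).toReal : ℝ) : EReal) := by
  have hdens : (fun x => entFun ((μ[|A]).rnDeriv μ x).toReal)
      =ᵐ[μ] A.indicator fun _ => entFun (μ A).toReal⁻¹ := by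
    filter_upwards [Measure.rnDeriv_smul_left_of_ne_top (μ.restrict A) μ
      (ENNReal.inv_ne_top.2 hcA), Measure.rnDeriv_restrict_self μ hA] with x hsmul hres
    rw [ProbabilityTheory.cond, hsmul, Pi.smul_apply, hres]
    by_cases hx : x ∈ A <;> simp [hx, entFun]
  have hint : Integrable (fun x => entFun ((μ[|A]).rnDeriv μ x).toReal) μ :=
    ((integrable_const _).indicator hA).congr hdens.symm
  rw [relEnt, if_pos ⟨cond_absolutelyContinuous, hint⟩, integral_congr_ae hdens,
    integral_indicator_const _ hA, measureReal_def]
  have : (μ A).toReal ≠ 0 := ENNReal.toReal_ne_zero.2 ⟨hcA, measure_ne_top μ A⟩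
  simp only [smul_eq_mul, entFun, Real.log_inv]
  field_simp

lemma hasFiniteSecondMoment_of_ae_mem_closedBall [PseudoMetricSpace X]
    [MeasurableSpace X] {ν : Measure X} [IsFiniteMeasure ν] {x₀ : X} {R : ℝ}
    (h : ∀ᵐ x ∂ν, x ∈ Metric.closedBall x₀ R) : HasFiniteSecondMoment ν := by
  refine ⟨x₀, (lintegral_mono_ae (g := fun _ => ENNReal.ofReal R ^ 2) ?_).trans_lt ?_⟩
  · filter_upwards [h] with x hx
    rw [edist_dist, dist_comm]
    exact pow_le_pow_left' (ENNReal.ofReal_le_ofReal hx) 2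
  · simp [lintegral_const, ENNReal.mul_lt_top]

lemma setSep_le_edist [PseudoEMetricSpace X] {A₀ A₁ : Set X} {x y : X}
    (hx : x ∈ A₀) (hy : y ∈ A₁) : setSep A₀ A₁ ≤ edist x y :=
  (iInf₂_le x hx).trans (iInf₂_le y hy)

lemma setSep_mono [PseudoEMetricSpace X] {A₀ A₁ B₀ B₁ : Set X}
    (h₀ : B₀ ⊆ A₀) (h₁ : B₁ ⊆ A₁) : setSep A₀ A₁ ≤ setSep B₀ B₁ :=
  le_iInf₂ fun _ hx => le_iInf₂ fun _ hy => setSep_le_edist (h₀ hx) (h₁ hy)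

lemma setSep_le_W2 [PseudoEMetricSpace X] [MeasurableSpace X]
    {A₀ A₁ : Set X} {ν₀ ν₁ : Measure X} [IsProbabilityMeasure ν₀]
    (h₀ : ∀ᵐ x ∂ν₀, x ∈ A₀) (h₁ : ∀ᵐ x ∂ν₁, x ∈ A₁) :
    setSep A₀ A₁ ≤ W2 ν₀ ν₁ := by
  refine le_iInf fun π => le_iInf fun hπ₀ => le_iInf fun hπ₁ => ?_
  have : IsProbabilityMeasure (π.map Prod.fst) := hπ₀ ▸ inferInstance
  have : IsProbabilityMeasure π := Measure.isProbabilityMeasure_of_map Prod.fst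
  have hsupp : ∀ᵐ p ∂π, p.1 ∈ A₀ ∧ p.2 ∈ A₁ :=
    (ae_of_ae_map measurable_fst.aemeasurable (hπ₀ ▸ h₀)).and
      (ae_of_ae_map measurable_snd.aemeasurable (hπ₁ ▸ h₁))
  have hcost : setSep A₀ A₁ ^ 2 ≤ ∫⁻ p, edist p.1 p.2 ^ 2 ∂π := by
    calc setSep A₀ A₁ ^ 2 = ∫⁻ _, setSep A₀ A₁ ^ 2 ∂π := by simp
      _ ≤ _ := lintegral_mono_ae <| hsupp.mono fun p hp =>
          pow_le_pow_left' (setSep_le_edist hp.1 hp.2) 2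
  calc setSep A₀ A₁ = (setSep A₀ A₁ ^ 2) ^ (1 / 2 : ℝ) := by
        rw [← ENNReal.rpow_natCast, ← ENNReal.rpow_mul]; norm_num
    _ ≤ _ := ENNReal.rpow_le_rpow hcost (by norm_num)

theorem CDInfty.W2_le [PseudoEMetricSpace X] [MeasurableSpace X]
    {μ : Measure X} [IsProbabilityMeasure μ] {K : ℝ} (hCD : CDInfty μ K) (hK : 0 < K)
    {ν₀ ν₁ : Measure X} [IsProbabilityMeasure ν₀] [IsProbabilityMeasure ν₁]
    (hm₀ : HasFiniteSecondMoment ν₀) (hm₁ : HasFiniteSecondMoment ν₁)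
    {e₀ e₁ : ℝ} (he₀ : relEnt ν₀ μ = e₀) (he₁ : relEnt ν₁ μ = e₁) :
    W2 ν₀ ν₁ ≤ ENNReal.ofReal √(4 / K * (e₀ + e₁)) := by
  have hmid : ∀ ε > 0, (0 : EReal) ≤
      (((e₀ + e₁) / 2 + ε : ℝ) : EReal) -
        ((K / 8 : ℝ) : EReal) * ((W2 ν₀ ν₁ ^ 2 : ℝ≥0∞) : EReal) := by
    intro ε hε
    obtain ⟨νt, hνt, -, -, -, hent⟩ := hCD ν₀ ν₁ ‹_› ‹_› hm₀ hm₁ ε hε (1 / 2) (by norm_num)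
    refine (relEnt_nonneg νt μ).trans (hent.trans_eq ?_)
    rw [he₀, he₁, show K / 2 * (1 / 2 * (1 - 1 / 2)) = K / 8 by ring, ← EReal.coe_mul,
      ← EReal.coe_mul, ← EReal.coe_add, sub_eq_add_neg, sub_eq_add_neg, add_right_comm,
      ← EReal.coe_add, sub_eq_add_neg]
    congr 2
    ring
  -- If `W₂ = ∞`, the right-hand side of the CD inequality is `-∞`, contradicting `Ent ≥ 0`.
  rcases eq_top_or_lt_top (W2 ν₀ ν₁) with htop | hfin
  · have := hmid 1 one_pos
    simp [htop, EReal.coe_mul_top_of_pos (show (0 : ℝ) < K / 8 by positivity)] at this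
  lift W2 ν₀ ν₁ to NNReal using hfin.ne with w
  have hquad : K / 8 * (w : ℝ) ^ 2 ≤ (e₀ + e₁) / 2 := by
    refine le_of_forall_pos_le_add fun ε hε => ?_
    have := hmid ε hε
    rw [← ENNReal.coe_pow, EReal.coe_nnreal_eq_coe_real, NNReal.coe_pow, ← EReal.coe_mul,
      ← EReal.coe_sub, EReal.coe_nonneg] at this
    linarith
  rw [← ENNReal.ofReal_coe_nnreal]
  refine ENNReal.ofReal_le_ofReal (Real.le_sqrt_of_sq_le ?_)
  rw [div_mul_eq_mul_div, div_le_iff₀ (by norm_num)] at hquad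
  rw [div_mul_eq_mul_div, le_div_iff₀ hK]
  linarith

lemma setSep_le_of_CDInfty_of_isBounded [PseudoMetricSpace X] [MeasurableSpace X]
    {μ : Measure X} [IsProbabilityMeasure μ] {K : ℝ} (hCD : CDInfty μ K) (hK : 0 < K)
    {A₀ A₁ : Set X} (hA₀ : MeasurableSet A₀) (hA₁ : MeasurableSet A₁)
    (hb₀ : Bornology.IsBounded A₀) (hb₁ : Bornology.IsBounded A₁)
    (hc₀ : μ A₀ ≠ 0) (hc₁ : μ A₁ ≠ 0) :
    setSep A₀ A₁ ≤
      ENNReal.ofReal √(4 / K * (-Real.log (μ A₀).toReal + -Real.log (μ A₁).toReal)) := by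
  have := cond_isProbabilityMeasure (μ := μ) hc₀
  have := cond_isProbabilityMeasure (μ := μ) hc₁
  have hmoment : ∀ {A : Set X}, MeasurableSet A → Bornology.IsBounded A → μ A ≠ 0 →
      HasFiniteSecondMoment μ[|A] := fun hA hb hc =>
    have ⟨x, _⟩ := nonempty_of_measure_ne_zero hc
    have ⟨_, hR⟩ := hb.subset_closedBall x
    hasFiniteSecondMoment_of_ae_mem_closedBall ((ae_cond_mem hA).mono fun _ hy => hR hy)
  calc setSep A₀ A₁ ≤ W2 μ[|A₀] μ[|A₁] := setSep_le_W2 (ae_cond_mem hA₀) (ae_cond_mem hA₁)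
    _ ≤ _ := hCD.W2_le hK (hmoment hA₀ hb₀ hc₀) (hmoment hA₁ hb₁ hc₁)
      (relEnt_cond μ hA₀ hc₀) (relEnt_cond μ hA₁ hc₁)

lemma tendsto_measure_inter_closedBall_nat [PseudoMetricSpace X] [MeasurableSpace X]
    (μ : Measure X) [IsFiniteMeasure μ] (A : Set X) (x₀ : X) :
    Tendsto (fun n : ℕ => (μ (A ∩ Metric.closedBall x₀ n)).toReal) atTop
      (𝓝 (μ A).toReal) := by
  have hmono : Monotone fun n : ℕ => A ∩ Metric.closedBall x₀ n := fun _ _ hmn =>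
    Set.inter_subset_inter_right _ (Metric.closedBall_subset_closedBall (Nat.cast_le.2 hmn))
  have := tendsto_measure_iUnion_atTop (μ := μ) hmono
  rw [Metric.iUnion_inter_closedBall_nat] at this
  exact (ENNReal.tendsto_toReal (measure_ne_top μ A)).comp this

lemma setSep_le_of_CDInfty [PseudoMetricSpace X] [MeasurableSpace X]
    [OpensMeasurableSpace X] {μ : Measure X} [IsProbabilityMeasure μ] {K : ℝ}
    (hCD : CDInfty μ K) (hK : 0 < K) {A₀ A₁ : Set X} (hA₀ : MeasurableSet A₀)
    (hA₁ : MeasurableSet A₁) (hc₀ : μ A₀ ≠ 0) (hc₁ : μ A₁ ≠ 0) :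
    setSep A₀ A₁ ≤
      ENNReal.ofReal √(4 / K * (-Real.log (μ A₀).toReal + -Real.log (μ A₁).toReal)) := by
  obtain ⟨x₀, -⟩ := nonempty_of_measure_ne_zero hc₀
  let B (A : Set X) (n : ℕ) := A ∩ Metric.closedBall x₀ n
  have hlim (A : Set X) := tendsto_measure_inter_closedBall_nat μ A x₀
  have hpos {A : Set X} (hc : μ A ≠ 0) : 0 < (μ A).toReal :=
    ENNReal.toReal_pos hc (measure_ne_top μ A)
  have hbound : Tendsto
      (fun n => ENNReal.ofReal √(4 / K * (-Real.log (μ (B A₀ n)).toReal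
        + -Real.log (μ (B A₁ n)).toReal))) atTop
      (𝓝 (ENNReal.ofReal √(4 / K * (-Real.log (μ A₀).toReal + -Real.log (μ A₁).toReal)))) :=
    ENNReal.tendsto_ofReal (((((hlim A₀).log (hpos hc₀).ne').neg.add
      ((hlim A₁).log (hpos hc₁).ne').neg).const_mul _).sqrt)
  refine ge_of_tendsto hbound ?_
  filter_upwards [(hlim A₀).eventually_const_lt (hpos hc₀),
    (hlim A₁).eventually_const_lt (hpos hc₁)] with n hn₀ hn₁
  have hB {A : Set X} (hA : MeasurableSet A) : MeasurableSet (B A n) :=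
    hA.inter Metric.isClosed_closedBall.measurableSet
  have hbdd (A : Set X) : Bornology.IsBounded (B A n) :=
    Metric.isBounded_closedBall.subset Set.inter_subset_right
  calc setSep A₀ A₁ ≤ setSep (B A₀ n) (B A₁ n) :=
        setSep_mono Set.inter_subset_left Set.inter_subset_left
    _ ≤ _ := setSep_le_of_CDInfty_of_isBounded hCD hK (hB hA₀) (hB hA₁) (hbdd A₀) (hbdd A₁)
        (ENNReal.toReal_pos_iff.1 hn₀).1.ne' (ENNReal.toReal_pos_iff.1 hn₁).1.ne'

end

theorem sep_le_of_CD_general {X : Type*}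
    [MetricSpace X] [MeasurableSpace X] [BorelSpace X]
    (μ : Measure X) [IsProbabilityMeasure μ]
    (K : ℝ) (hK : 0 < K) (hCD : CDInfty μ K)
    (κ₀ κ₁ : ℝ) (h₀ : 0 < κ₀) (h₁ : 0 < κ₁) :
    sep2 μ κ₀ κ₁ ≤ ENNReal.ofReal (Real.sqrt ((4 / K) * Real.log (1 / (κ₀ * κ₁)))) := by
  refine iSup_le fun A₀ => iSup_le fun A₁ => iSup_le fun hA₀ => iSup_le fun hA₁ =>
    iSup_le fun hκ₀ => iSup_le fun hκ₁ => ?_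
  have hle₀ : κ₀ ≤ (μ A₀).toReal := (ENNReal.ofReal_le_iff_le_toReal (measure_ne_top μ A₀)).1 hκ₀
  have hle₁ : κ₁ ≤ (μ A₁).toReal := (ENNReal.ofReal_le_iff_le_toReal (measure_ne_top μ A₁)).1 hκ₁
  have hc₀ : μ A₀ ≠ 0 := (ENNReal.toReal_pos_iff.1 (h₀.trans_le hle₀)).1.ne'
  have hc₁ : μ A₁ ≠ 0 := (ENNReal.toReal_pos_iff.1 (h₁.trans_le hle₁)).1.ne'
  calc setSep A₀ A₁
      ≤ ENNReal.ofReal √(4 / K * (-Real.log (μ A₀).toReal + -Real.log (μ A₁).toReal)) :=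
        setSep_le_of_CDInfty hCD hK hA₀ hA₁ hc₀ hc₁
    _ ≤ ENNReal.ofReal √(4 / K * (-Real.log κ₀ + -Real.log κ₁)) := by
        gcongr
    _ = _ := by
        rw [one_div, Real.log_inv, Real.log_mul h₀.ne' h₁.ne', neg_add]

/-- if an mm-space `X` satisfies `CD(K, ∞)` with `K > 0`, then for
any `κ₀, κ₁ > 0` with `κ₀ + κ₁ < 1`,
`Sep(X; κ₀, κ₁) ≤ √((4/K) log(1/(κ₀ κ₁)))`. -/
theorem sep_le_of_CD {X : Type*}
    [MetricSpace X] [CompleteSpace X] [TopologicalSpace.SeparableSpace X]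
    [MeasurableSpace X] [BorelSpace X]
    (μ : Measure X) [IsProbabilityMeasure μ] [μ.IsOpenPosMeasure]
    (K : ℝ) (hK : 0 < K) (hCD : CDInfty μ K)
    (κ₀ κ₁ : ℝ) (h₀ : 0 < κ₀) (h₁ : 0 < κ₁) (hsum : κ₀ + κ₁ < 1) :
    sep2 μ κ₀ κ₁ ≤ ENNReal.ofReal (Real.sqrt ((4 / K) * Real.log (1 / (κ₀ * κ₁)))) :=
  sep_le_of_CD_general μ K hK hCD κ₀ κ₁ h₀ h₁
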